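/- arXiv:1706.07650 — 4 statements merged into one kernel-verified Lean document; each statement's English description precedes it below -/
import Mathlib

section
/- In the semi-discrete setting with Euclidean cost, there exists a solution to Monge's problem which is unique up to μ-null sets: there is a measurable map T* : ℝ^d → ℝ^d with T*_{#}μ = ν minimizing ∫_{ℝ^d} ‖x − T(x)‖ dμ(x) over all measurable maps T with T_{#}μ = ν, and any other minimizer agrees with T* μ-almost everywhere. -/
/-!
Semi-discrete Kantorovich duality. For weights `w : Fin n → ℝ` the dual objective
`Φ w = ∑ i, a i * w i + ∫ minᵢ (‖x - y i‖ - w i) dμ` is continuous, invariant under adding a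
constant to `w`, and small when `max w - min w` is large, so it has a maximiser `w`. Raising `w i`
by `t > 0` gains `a i * t` and loses at most `t` times the mass of the enlarged Laguerre cell `i`;
letting `t ↓ 0` gives `a i ≤ μ(cellᵢ)`. Two cells meet only where `‖x - y i‖ - ‖x - y j‖` is
constant, a Lebesgue-null set when `d ≥ 2`, so the cells partition `μ` up to null sets,
`μ(cellᵢ) = a i`, and the map `T` sending cell `i` to `y i` pushes `μ` to `ν`.
For any transport map `S`, `‖x - S x‖ ≥ minᵢ (‖x - y i‖ - w i) + w_{S x}` pointwise; integrating
gives `∫ ‖x - S x‖ dμ ≥ Φ w`, with equality iff a.e. `x` lies in the cell of `S x`. `T` attains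
equality, and as a.e. `x` lies in exactly one cell, every minimiser agrees with `T` a.e.
-/

open MeasureTheory Set Finset Function

theorem strictConvexOn_norm_add_smul {E : Type*} [NormedAddCommGroup E] [NormedSpace ℝ E]
    [StrictConvexSpace ℝ E] {p v : E} (h : LinearIndependent ℝ ![p, v]) :
    StrictConvexOn ℝ univ fun t : ℝ => ‖p + t • v‖ := by
  refine ⟨convex_univ, fun s _ t _ hst α β hα hβ hαβ => ?_⟩
  have hindep : LinearIndependent ℝ ![α • (p + s • v), β • (p + t • v)] := by
    rw [LinearIndependent.pair_iff] at h ⊢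
    intro γ δ hγδ
    obtain ⟨h₁, h₂⟩ := h (γ * α + δ * β) (γ * α * s + δ * β * t) (by rw [← hγδ]; module)
    have hγ : γ * α * (s - t) = 0 := by linear_combination h₂ - t * h₁
    obtain rfl : γ = 0 := by simpa [hα.ne', sub_ne_zero.2 hst] using hγ
    exact ⟨rfl, by simpa [hβ.ne'] using h₁⟩
  have hray : ¬SameRay ℝ (α • (p + s • v)) (β • (p + t • v)) := fun hr =>
    sameRay_or_sameRay_neg_iff_not_linearIndependent.1 (Or.inl hr) hindep
  calc ‖p + (α • s + β • t) • v‖ = ‖α • (p + s • v) + β • (p + t • v)‖ := by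
        congr 1
        linear_combination (norm := module) -hαβ • p
    _ < ‖α • (p + s • v)‖ + ‖β • (p + t • v)‖ := norm_add_lt_of_not_sameRay hray
    _ = α • ‖p + s • v‖ + β • ‖p + t • v‖ := by
        rw [norm_smul, norm_smul, Real.norm_of_nonneg hα.le, Real.norm_of_nonneg hβ.le]; rfl

theorem StrictConvexOn.strictMono_sub_comp_sub {f : ℝ → ℝ} (hf : StrictConvexOn ℝ univ f)
    {δ : ℝ} (hδ : 0 < δ) : StrictMono fun t => f t - f (t - δ) := by
  intro t₁ t₂ hlt
  have s₁ := hf.slope_strict_mono_adjacent (mem_univ (t₁ - δ)) (mem_univ t₂)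
    (by linarith : t₁ - δ < t₁) hlt
  have s₂ := hf.slope_strict_mono_adjacent (mem_univ (t₁ - δ)) (mem_univ t₂)
    (by linarith : t₁ - δ < t₂ - δ) (by linarith : t₂ - δ < t₂)
  rw [div_lt_div_iff₀ (by linarith) (by linarith)] at s₁ s₂
  simp only
  nlinarith

/-- On a line `q + ℝ (b - a)` off the line through `a` and `b`, the function
`‖x - a‖ - ‖x - b‖` is strictly monotone, so it takes the value `r` at most once; the lines through
the null set `line(a, b)` are then integrated out with `ae_ae_add_linearMap_mem_iff`. -/
theorem addHaar_setOf_norm_sub_sub_norm_sub_eq {E : Type*} [NormedAddCommGroup E]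
    [NormedSpace ℝ E] [StrictConvexSpace ℝ E] [FiniteDimensional ℝ E] [MeasurableSpace E]
    [BorelSpace E] (μ : Measure E) [μ.IsAddHaarMeasure] (hE : 2 ≤ Module.finrank ℝ E)
    {a b : E} (hab : a ≠ b) (r : ℝ) : μ {x | ‖x - a‖ - ‖x - b‖ = r} = 0 := by
  set v := b - a
  have hv : v ≠ 0 := sub_ne_zero.2 hab.symm
  set ℓ : AffineSubspace ℝ E := AffineSubspace.mk' a (Submodule.span ℝ {v})
  have hℓ : μ ℓ = 0 := by
    refine Measure.addHaar_affineSubspace μ ℓ fun htop => ?_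
    have hdir := congrArg AffineSubspace.direction htop
    rw [AffineSubspace.direction_mk', AffineSubspace.direction_top] at hdir
    have := finrank_span_singleton (K := ℝ) hv
    rw [hdir, finrank_top] at this
    omega
  have hclosed : IsClosed {x : E | ‖x - a‖ - ‖x - b‖ = r} :=
    isClosed_eq (by fun_prop) continuous_const
  rw [measure_eq_zero_iff_ae_notMem]
  change ∀ᵐ x ∂μ, x ∈ {x : E | ‖x - a‖ - ‖x - b‖ = r}ᶜ
  rw [← ae_ae_add_linearMap_mem_iff
    (LinearMap.toSpanSingleton ℝ E v) volume μ hclosed.measurableSet.compl]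
  filter_upwards [measure_eq_zero_iff_ae_notMem.1 hℓ] with q hq
  have hindep : LinearIndependent ℝ ![q - a, v] := by
    refine linearIndependent_fin2.2 ⟨by simpa using hv, fun t ht => hq ?_⟩
    rw [SetLike.mem_coe, AffineSubspace.mem_mk', vsub_eq_sub, Submodule.mem_span_singleton]
    exact ⟨t, by simpa using ht⟩
  have hmono := (strictConvexOn_norm_add_smul hindep).strictMono_sub_comp_sub one_pos
  refine measure_mono_null (fun t ht => ?_)
    ((show {t : ℝ | ‖q - a + t • v‖ - ‖q - a + (t - 1) • v‖ = r}.Subsingleton from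
      fun t₁ h₁ t₂ h₂ => hmono.injective (h₁.trans h₂.symm)).measure_zero volume)
  simp only [mem_compl_iff, mem_ofPred_eq, not_not, LinearMap.toSpanSingleton_apply] at ht
  simp only [mem_ofPred_eq, ← ht, v, sub_smul, one_smul]
  congr 2 <;> abel

theorem sum_mul_update {ι : Type*} [Fintype ι] [DecidableEq ι] (a w : ι → ℝ) (i : ι) (r : ℝ) :
    ∑ j, a j * update w i r j = ∑ j, a j * w j + a i * (r - w i) := by
  have : ∀ j, a j * update w i r j = a j * w j + if j = i then a i * (r - w i) else 0 := by
    intro j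
    rcases eq_or_ne j i with rfl | h
    · simp only [update_self, if_true]; ring
    · simp [h]
  simp [this, sum_add_distrib]

section Measurable

variable {X ι : Type*} [MeasurableSpace X]

/-- `f x` is the first `i`, in an enumeration of `ι`, with `x ∈ V i`. -/
theorem exists_measurable_forall_mem [Countable ι] [Nonempty ι] [MeasurableSpace ι]
    {V : ι → Set X} (hV : ∀ i, MeasurableSet (V i)) (hcov : ∀ x, ∃ i, x ∈ V i) :
    ∃ f : X → ι, Measurable f ∧ ∀ x, x ∈ V (f x) := by
  classical
  obtain ⟨_⟩ := nonempty_encodable ι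
  have hp : ∀ x, ∃ k, ∃ i, Encodable.encode i = k ∧ x ∈ V i := fun x =>
    let ⟨i, hi⟩ := hcov x; ⟨_, i, rfl, hi⟩
  have hN : Measurable fun x => Nat.find (hp x) := measurable_find hp fun k => by
    have : {x | ∃ i, Encodable.encode i = k ∧ x ∈ V i} =
        ⋃ i, {_x | Encodable.encode i = k} ∩ V i := by
      ext; simp
    rw [this]
    exact .iUnion fun i => (MeasurableSet.const _).inter (hV i)
  refine ⟨fun x => (Encodable.decode (Nat.find (hp x))).getD (Classical.arbitrary ι),
    (measurable_from_nat (f := fun k => (Encodable.decode k).getD (Classical.arbitrary ι))).comp hN,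
    fun x => ?_⟩
  obtain ⟨i, hi, hx⟩ := Nat.find_spec (hp x)
  simpa only [← hi, Encodable.encodek, Option.getD_some] using hx

variable [Fintype ι] {Y : Type*} [MeasurableSpace Y] {μ : Measure X}

theorem map_comp_eq_sum_smul_dirac [MeasurableSpace ι] [MeasurableSingletonClass ι]
    {f : X → ι} (hf : Measurable f) (y : ι → Y) :
    μ.map (y ∘ f) = ∑ i, μ (f ⁻¹' {i}) • Measure.dirac (y i) := by
  classical
  ext s hs
  rw [Measure.map_apply ((measurable_of_countable y).comp hf) hs, Measure.finsetSum_apply,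
    preimage_comp, show y ⁻¹' s = ↑(univ.filter (y · ∈ s)) by ext; simp,
    ← sum_measure_preimage_singleton _ fun i _ => hf (measurableSet_singleton i), sum_filter]
  refine sum_congr rfl fun i _ => ?_
  by_cases h : y i ∈ s <;> simp [Measure.dirac_apply' _ hs, h]

variable [MeasurableSingletonClass Y] {a : ι → ℝ} {y : ι → Y} {S : X → Y}

theorem ae_exists_eq_of_map_eq (hS : Measurable S)
    (hmap : μ.map S = ∑ i, ENNReal.ofReal (a i) • Measure.dirac (y i)) :
    ∀ᵐ x ∂μ, ∃ i, S x = y i := by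
  have : ∀ᵐ z ∂(μ.map S), z ∈ range y := by
    rw [hmap, ae_finsetSum_measure_iff]
    exact fun i _ => Measure.ae_smul_measure (by simp [ae_dirac_eq]) _
  filter_upwards [ae_of_ae_map hS.aemeasurable this] with x ⟨i, hi⟩
  exact ⟨i, hi.symm⟩

theorem integrable_sum_smul_dirac (r : ι → ENNReal) (hr : ∀ i, r i ≠ ⊤) (f : Y → ℝ) :
    Integrable f (∑ i, r i • Measure.dirac (y i)) :=
  integrable_finsetSum_measure.2 fun i _ => (integrable_dirac enorm_lt_top).smul_measure (hr i)

theorem integrable_comp_of_map_eq (hS : Measurable S)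
    (hmap : μ.map S = ∑ i, ENNReal.ofReal (a i) • Measure.dirac (y i)) {f : Y → ℝ}
    (hf : Measurable f) : Integrable (fun x => f (S x)) μ :=
  (integrable_map_measure hf.aestronglyMeasurable hS.aemeasurable).1
    (hmap ▸ integrable_sum_smul_dirac _ (fun _ => ENNReal.ofReal_ne_top) f)

theorem integral_comp_of_map_eq (ha : ∀ i, 0 ≤ a i) (hS : Measurable S)
    (hmap : μ.map S = ∑ i, ENNReal.ofReal (a i) • Measure.dirac (y i)) {f : Y → ℝ}
    (hf : Measurable f) : ∫ x, f (S x) ∂μ = ∑ i, a i * f (y i) := by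
  rw [← integral_map hS.aemeasurable hf.aestronglyMeasurable, hmap,
    integral_finsetSum_measure fun i _ => (integrable_dirac enorm_lt_top).smul_measure
      ENNReal.ofReal_ne_top]
  simp [integral_smul_measure, integral_dirac, ENNReal.toReal_ofReal (ha _)]

end Measurable

section LaguerreCell

variable {X ι : Type*}

def laguerreCell (c : ι → X → ℝ) (w : ι → ℝ) (i : ι) : Set X :=
  {x | ∀ k, c i x - w i ≤ c k x - w k}

theorem measurableSet_laguerreCell [MeasurableSpace X] [Countable ι] {c : ι → X → ℝ}
    (hc : ∀ i, Measurable (c i)) (w : ι → ℝ) (i : ι) : MeasurableSet (laguerreCell c w i) := by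
  simp only [laguerreCell, ofPred_forall]
  exact .iInter fun k => measurableSet_le (by fun_prop) (by fun_prop)

theorem aedisjoint_laguerreCell [MeasurableSpace X] {μ : Measure X} {c : ι → X → ℝ}
    (htie : ∀ i j, i ≠ j → ∀ r, μ {x | c i x - c j x = r} = 0)
    (w : ι → ℝ) {i j : ι} (hij : i ≠ j) :
    AEDisjoint μ (laguerreCell c w i) (laguerreCell c w j) :=
  measure_mono_null (fun x ⟨hi, hj⟩ => by
    show c i x - c j x = w i - w j
    linarith [hi j, hj i]) (htie i j hij (w i - w j))

theorem ae_eq_of_mem_laguerreCell [MeasurableSpace X] [Countable ι] {μ : Measure X}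
    {c : ι → X → ℝ} (htie : ∀ i j, i ≠ j → ∀ r, μ {x | c i x - c j x = r} = 0) (w : ι → ℝ) :
    ∀ᵐ x ∂μ, ∀ i j, x ∈ laguerreCell c w i → x ∈ laguerreCell c w j → i = j := by
  rw [ae_all_iff]
  intro i
  rw [ae_all_iff]
  intro j
  rcases eq_or_ne i j with rfl | hij
  · exact .of_forall fun _ _ _ => rfl
  · filter_upwards [measure_eq_zero_iff_ae_notMem.1 (aedisjoint_laguerreCell htie w hij)]
      with x hx hi hj
    exact absurd ⟨hi, hj⟩ hx

variable [Fintype ι] [Nonempty ι] {c : ι → X → ℝ} {w : ι → ℝ} {x : X}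

noncomputable def cTransform (c : ι → X → ℝ) (w : ι → ℝ) (x : X) : ℝ :=
  univ.inf' univ_nonempty fun i => c i x - w i

theorem cTransform_le (i : ι) : cTransform c w x ≤ c i x - w i :=
  inf'_le _ (mem_univ i)

theorem le_cTransform_iff {r : ℝ} : r ≤ cTransform c w x ↔ ∀ i, r ≤ c i x - w i := by
  simp [cTransform]

theorem mem_laguerreCell_iff {i : ι} :
    x ∈ laguerreCell c w i ↔ cTransform c w x = c i x - w i :=
  ⟨fun h => (cTransform_le i).antisymm (le_cTransform_iff.2 h), fun h k => h ▸ cTransform_le k⟩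

theorem exists_mem_laguerreCell (c : ι → X → ℝ) (w : ι → ℝ) (x : X) :
    ∃ i, x ∈ laguerreCell c w i := by
  obtain ⟨i, -, hi⟩ := univ.exists_mem_eq_inf' univ_nonempty fun i => c i x - w i
  exact ⟨i, mem_laguerreCell_iff.2 hi⟩

theorem cTransform_add_const (s : ℝ) :
    cTransform c (fun i => w i + s) x = cTransform c w x - s := by
  obtain ⟨i, hi⟩ := exists_mem_laguerreCell c w x
  refine le_antisymm ?_ (le_cTransform_iff.2 fun k => ?_)
  · linarith [cTransform_le (c := c) (w := fun i => w i + s) (x := x) i, mem_laguerreCell_iff.1 hi]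
  · linarith [cTransform_le (c := c) (w := w) (x := x) k]

theorem dist_cTransform_le (w w' : ι → ℝ) (x : X) :
    dist (cTransform c w x) (cTransform c w' x) ≤ dist w w' := by
  have key : ∀ u u' : ι → ℝ, cTransform c u x ≤ cTransform c u' x + dist u u' := fun u u' => by
    obtain ⟨i, hi⟩ := exists_mem_laguerreCell c u' x
    have := (abs_le.1 ((Real.dist_eq _ _).symm.trans_le (dist_le_pi_dist u u' i))).1
    linarith [cTransform_le (c := c) (w := u) (x := x) i, mem_laguerreCell_iff.1 hi]
  rw [Real.dist_eq, abs_sub_le_iff]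
  constructor <;> linarith [key w w', key w' w, dist_comm w w']

theorem cTransform_sub_cTransform_update_le [DecidableEq ι] (w : ι → ℝ) (i : ι) (t : ℝ)
    (x : X) : cTransform c w x - cTransform c (update w i (w i + t)) x ≤
      (laguerreCell c (update w i (w i + t)) i).indicator (fun _ => t) x := by
  by_cases hx : x ∈ laguerreCell c (update w i (w i + t)) i
  · rw [indicator_of_mem hx, mem_laguerreCell_iff.1 hx, update_self]
    linarith [cTransform_le (c := c) (w := w) (x := x) i]
  · obtain ⟨k, hk⟩ := exists_mem_laguerreCell c (update w i (w i + t)) x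
    have hki : k ≠ i := by rintro rfl; exact hx hk
    rw [indicator_of_notMem hx, mem_laguerreCell_iff.1 hk, update_of_ne hki, sub_nonpos]
    exact cTransform_le k

end LaguerreCell

section Update

variable {X ι : Type*} [DecidableEq ι] {c : ι → X → ℝ} {w : ι → ℝ} {i : ι}

theorem mem_laguerreCell_update_add {t : ℝ} (ht : 0 ≤ t) {x : X} :
    x ∈ laguerreCell c (update w i (w i + t)) i ↔ ∀ k, c i x - w i - t ≤ c k x - w k := by
  refine forall_congr' fun k => ?_
  rcases eq_or_ne k i with rfl | hk
  · simp only [update_self]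
    constructor <;> intro <;> linarith
  · simp only [update_self, update_of_ne hk, sub_sub]

theorem laguerreCell_eq_iInter_update (c : ι → X → ℝ) (w : ι → ℝ) (i : ι) :
    laguerreCell c w i = ⋂ n : ℕ, laguerreCell c (update w i (w i + 1 / (n + 1))) i := by
  ext x
  simp only [mem_iInter, mem_laguerreCell_update_add Nat.one_div_pos_of_nat.le]
  refine ⟨fun h n k => by linarith [h k, Nat.one_div_pos_of_nat (α := ℝ) (n := n)],
    fun h k => le_of_forall_pos_le_add fun ε hε => ?_⟩
  obtain ⟨n, hn⟩ := exists_nat_one_div_lt hε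
  linarith [h n k]

theorem antitone_laguerreCell_update (c : ι → X → ℝ) (w : ι → ℝ) (i : ι) :
    Antitone fun n : ℕ => laguerreCell c (update w i (w i + 1 / (n + 1))) i := by
  intro m n hmn x hx
  rw [mem_laguerreCell_update_add Nat.one_div_pos_of_nat.le] at hx ⊢
  have : (1 : ℝ) / (n + 1) ≤ 1 / (m + 1) := Nat.one_div_le_one_div hmn
  exact fun k => by linarith [hx k]

end Update

section Dual

variable {X ι : Type*} [MeasurableSpace X] [Fintype ι] [Nonempty ι] {μ : Measure X}
  {a : ι → ℝ} {c : ι → X → ℝ}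

theorem integrable_cTransform [IsFiniteMeasure μ] (hc : ∀ i, Integrable (c i) μ)
    (w : ι → ℝ) : Integrable (cTransform c w) μ := by
  have : cTransform c w = univ.inf' univ_nonempty fun i => c i - fun _ => w i := by
    ext x; simp [cTransform, Finset.inf'_apply]
  rw [this]
  exact inf'_induction (p := fun f : X → ℝ => Integrable f μ) _ _ (fun f hf g hg => hf.inf hg)
    fun i _ => (hc i).sub (integrable_const _)

noncomputable def dualObjective (μ : Measure X) (a : ι → ℝ) (c : ι → X → ℝ) (w : ι → ℝ) : ℝ :=
  ∑ i, a i * w i + ∫ x, cTransform c w x ∂μ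

variable [IsProbabilityMeasure μ]

theorem continuous_dualObjective (hc : ∀ i, Integrable (c i) μ) :
    Continuous (dualObjective μ a c) := by
  have hlip : LipschitzWith 1 fun w => ∫ x, cTransform c w x ∂μ :=
    .of_dist_le_mul fun w w' => by
      rw [dist_eq_norm, ← integral_sub (integrable_cTransform hc w) (integrable_cTransform hc w')]
      simpa using norm_integral_le_of_norm_le_const (μ := μ)
        (f := fun x => cTransform c w x - cTransform c w' x)
        (.of_forall fun x => by rw [← dist_eq_norm]; exact dist_cTransform_le w w' x)
  exact (continuous_finsetSum _ fun i _ => by fun_prop).add hlip.continuous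

theorem dualObjective_add_const (hsum : ∑ i, a i = 1) (hc : ∀ i, Integrable (c i) μ)
    (w : ι → ℝ) (s : ℝ) : dualObjective μ a c (fun i => w i + s) = dualObjective μ a c w := by
  simp only [dualObjective, cTransform_add_const, mul_add, sum_add_distrib, ← sum_mul, hsum,
    integral_sub (integrable_cTransform hc w) (integrable_const s)]
  simp

theorem dualObjective_le_of_forall_le (ha : ∀ i, 0 ≤ a i) (hsum : ∑ i, a i = 1)
    (hc : ∀ i, Integrable (c i) μ) {w : ι → ℝ} {m : ι} (hm : ∀ j, w j ≤ w m) (i : ι) :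
    dualObjective μ a c w ≤ ∫ x, c m x ∂μ - a i * (w m - w i) := by
  have hint : ∫ x, cTransform c w x ∂μ ≤ ∫ x, c m x ∂μ - w m := by
    calc ∫ x, cTransform c w x ∂μ ≤ ∫ x, (c m x - w m) ∂μ :=
          integral_mono (integrable_cTransform hc w) ((hc m).sub (integrable_const (w m)))
            fun x => cTransform_le m
      _ = ∫ x, c m x ∂μ - w m := by simp [integral_sub (hc m) (integrable_const _)]
  have hsingle := single_le_sum (f := fun j => a j * (w m - w j))
    (fun j _ => mul_nonneg (ha j) (sub_nonneg.2 (hm j))) (mem_univ i)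
  simp only [mul_sub, sum_sub_distrib, ← sum_mul, hsum, one_mul] at hsingle
  unfold dualObjective
  linarith

/-- After the normalisation `min v = 0`, which does not change `dualObjective`, a weight vector
outside the box `[0, R]ⁱ` has value below `dualObjective μ a c 0`, so the maximum over the box is
global. -/
theorem exists_forall_dualObjective_le (ha : ∀ i, 0 < a i) (hsum : ∑ i, a i = 1)
    (hc : ∀ i, Integrable (c i) μ) :
    ∃ w, ∀ v, dualObjective μ a c v ≤ dualObjective μ a c w := by
  obtain ⟨i₀, hi₀⟩ := Finite.exists_min a
  obtain ⟨m₀, hm₀⟩ := Finite.exists_max fun i => ∫ x, c i x ∂μ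
  set R := (∫ x, c m₀ x ∂μ - dualObjective μ a c 0) / a i₀
  have h0 : dualObjective μ a c 0 ≤ ∫ x, c m₀ x ∂μ := by
    simpa using dualObjective_le_of_forall_le (fun i => (ha i).le) hsum hc (w := 0)
      (fun _ => le_rfl) i₀
  have hR : a i₀ * R = ∫ x, c m₀ x ∂μ - dualObjective μ a c 0 := mul_div_cancel₀ _ (ha i₀).ne'
  have hR0 : 0 ≤ R := div_nonneg (sub_nonneg.2 h0) (ha i₀).le
  obtain ⟨w, -, hw⟩ := (isCompact_Icc (a := (0 : ι → ℝ)) (b := fun _ => R)).exists_isMaxOn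
    ⟨0, le_rfl, fun _ => hR0⟩ (continuous_dualObjective (a := a) hc).continuousOn
  refine ⟨w, fun v => ?_⟩
  obtain ⟨i, hi⟩ := Finite.exists_min v
  obtain ⟨m, hm⟩ := Finite.exists_max v
  rw [← dualObjective_add_const hsum hc v (-v i)]
  by_cases hvR : v m - v i ≤ R
  · exact hw ⟨fun j => by simpa using hi j, fun j => by simp; linarith [hm j]⟩
  · have hgap : a i₀ * R ≤ a i * (v m - v i) :=
      mul_le_mul (hi₀ i) (not_le.1 hvR).le hR0 (ha i).le
    calc dualObjective μ a c (fun j => v j + -v i) ≤ ∫ x, c m x ∂μ - a i * (v m - v i) := by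
          simpa [← sub_eq_add_neg] using dualObjective_le_of_forall_le (fun i => (ha i).le) hsum
            hc (w := fun j => v j + -v i) (m := m) (fun j => by simpa using hm j) i
      _ ≤ dualObjective μ a c 0 := by linarith [hm₀ m]
      _ ≤ dualObjective μ a c w := hw ⟨le_rfl, fun _ => hR0⟩

theorem le_measureReal_laguerreCell (hc : ∀ i, Measurable (c i))
    (hci : ∀ i, Integrable (c i) μ) {w : ι → ℝ}
    (hmax : ∀ v, dualObjective μ a c v ≤ dualObjective μ a c w) (i : ι) :
    a i ≤ μ.real (laguerreCell c w i) := by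
  classical
  have hstep : ∀ t : ℝ, 0 < t → a i ≤ μ.real (laguerreCell c (update w i (w i + t)) i) := by
    intro t ht
    set w' := update w i (w i + t)
    have hcell := measurableSet_laguerreCell hc w' i
    have hloss : ∫ x, (cTransform c w x - cTransform c w' x) ∂μ ≤
        μ.real (laguerreCell c w' i) * t := by
      rw [← smul_eq_mul, ← integral_indicator_const t hcell]
      exact integral_mono ((integrable_cTransform hci w).sub (integrable_cTransform hci w'))
        ((integrable_const t).indicator hcell) fun x => cTransform_sub_cTransform_update_le w i t x
    have hle := hmax w'
    rw [integral_sub (integrable_cTransform hci w) (integrable_cTransform hci w')] at hloss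
    simp only [dualObjective, w', sum_mul_update, add_sub_cancel_left] at hle
    exact le_of_mul_le_mul_right (by linarith) ht
  rw [measureReal_def, ← ENNReal.ofReal_le_iff_le_toReal (measure_ne_top _ _),
    laguerreCell_eq_iInter_update, (antitone_laguerreCell_update c w i).measure_iInter
      (fun n => (measurableSet_laguerreCell hc _ i).nullMeasurableSet) ⟨0, measure_ne_top _ _⟩]
  exact le_iInf fun n => ENNReal.ofReal_le_of_le_toReal (hstep _ Nat.one_div_pos_of_nat)

theorem measureReal_laguerreCell_eq (hsum : ∑ i, a i = 1) (hc : ∀ i, Measurable (c i))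
    (hci : ∀ i, Integrable (c i) μ) (htie : ∀ i j, i ≠ j → ∀ r, μ {x | c i x - c j x = r} = 0)
    {w : ι → ℝ} (hmax : ∀ v, dualObjective μ a c v ≤ dualObjective μ a c w) (i : ι) :
    μ.real (laguerreCell c w i) = a i := by
  have htotal : ∑ j, μ (laguerreCell c w j) = 1 := by
    rw [← tsum_fintype (L := .unconditional _), ← measure_iUnion₀
      (fun j k => aedisjoint_laguerreCell htie w)
      (fun j => (measurableSet_laguerreCell hc w j).nullMeasurableSet),
      iUnion_eq_univ_iff.2 (exists_mem_laguerreCell c w), measure_univ]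
  have htotal' : ∑ j, a j = ∑ j, μ.real (laguerreCell c w j) := by
    simp_rw [hsum, measureReal_def, ← ENNReal.toReal_sum (fun j _ => measure_ne_top _ _),
      htotal, ENNReal.toReal_one]
  exact ((sum_eq_sum_iff_of_le fun j _ => le_measureReal_laguerreCell hc hci hmax j).1
    htotal' i (mem_univ i)).symm

theorem exists_map_eq_forall_mem_laguerreCell {Y : Type*} [MeasurableSpace Y]
    (hsum : ∑ i, a i = 1) (hc : ∀ i, Measurable (c i)) (hci : ∀ i, Integrable (c i) μ)
    (htie : ∀ i j, i ≠ j → ∀ r, μ {x | c i x - c j x = r} = 0) {w : ι → ℝ}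
    (hmax : ∀ v, dualObjective μ a c v ≤ dualObjective μ a c w) (y : ι → Y) :
    ∃ T : X → Y, Measurable T ∧ μ.map T = ∑ i, ENNReal.ofReal (a i) • Measure.dirac (y i) ∧
      ∀ x, ∃ i, T x = y i ∧ x ∈ laguerreCell c w i := by
  let _ : MeasurableSpace ι := ⊤
  obtain ⟨f, hf, hfV⟩ := exists_measurable_forall_mem (measurableSet_laguerreCell hc w)
    (exists_mem_laguerreCell c w)
  have hpre : ∀ i, μ (f ⁻¹' {i}) = ENNReal.ofReal (a i) := fun i => by
    rw [← measureReal_laguerreCell_eq hsum hc hci htie hmax i, ofReal_measureReal]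
    refine measure_congr (Filter.eventuallyEq_set.2 ?_)
    filter_upwards [ae_eq_of_mem_laguerreCell htie w] with x hx
    exact ⟨fun h => h ▸ hfV x, fun h => hx _ _ (hfV x) h⟩
  exact ⟨y ∘ f, (measurable_of_countable y).comp hf,
    by simp [map_comp_eq_sum_smul_dirac hf, hpre], fun x => ⟨f x, rfl, hfV x⟩⟩

end Dual

section Cost

variable {X ι Y : Type*} [Fintype ι]

/-- The target-side Kantorovich potential. -/
noncomputable def pointWeight (y : ι → Y) (w : ι → ℝ) (z : Y) : ℝ :=
  ∑ i, ({y i} : Set Y).indicator (fun _ => w i) z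

theorem pointWeight_apply {y : ι → Y} (hy : Injective y) (w : ι → ℝ) (i : ι) :
    pointWeight y w (y i) = w i := by
  classical
  simp [pointWeight, indicator_apply, hy.eq_iff]

variable [MeasurableSpace X] [MeasurableSpace Y] [MeasurableSingletonClass Y] {μ : Measure X}
  {a : ι → ℝ} {y : ι → Y} {S : X → Y} {cost : X → Y → ℝ}

theorem measurable_pointWeight (y : ι → Y) (w : ι → ℝ) : Measurable (pointWeight y w) := by
  unfold pointWeight
  fun_prop (disch := exact measurableSet_singleton _)

theorem integrable_cost_comp (hcost : Measurable (uncurry cost))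
    (hc : ∀ i, Integrable (fun x => cost x (y i)) μ) (hS : Measurable S)
    (hmap : μ.map S = ∑ i, ENNReal.ofReal (a i) • Measure.dirac (y i)) :
    Integrable (fun x => cost x (S x)) μ := by
  refine (integrable_finsetSum univ fun i _ => (hc i).abs).mono'
    (hcost.comp (measurable_id.prodMk hS)).aestronglyMeasurable ?_
  filter_upwards [ae_exists_eq_of_map_eq hS hmap] with x ⟨i, hi⟩
  rw [hi, Real.norm_eq_abs]
  exact single_le_sum (f := fun j => |cost x (y j)|) (fun j _ => abs_nonneg _) (mem_univ i)

variable [Nonempty ι]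

theorem ae_cTransform_le_cost_sub_pointWeight (hy : Injective y) (hS : Measurable S)
    (hmap : μ.map S = ∑ i, ENNReal.ofReal (a i) • Measure.dirac (y i)) (w : ι → ℝ) :
    ∀ᵐ x ∂μ, cTransform (fun i x => cost x (y i)) w x ≤ cost x (S x) - pointWeight y w (S x) := by
  filter_upwards [ae_exists_eq_of_map_eq hS hmap] with x ⟨i, hi⟩
  rw [hi, pointWeight_apply hy]
  exact cTransform_le i

variable [IsProbabilityMeasure μ]

theorem integral_cost_sub_dualObjective (ha : ∀ i, 0 ≤ a i) (hy : Injective y)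
    (hcost : Measurable (uncurry cost)) (hc : ∀ i, Integrable (fun x => cost x (y i)) μ)
    (hS : Measurable S) (hmap : μ.map S = ∑ i, ENNReal.ofReal (a i) • Measure.dirac (y i))
    (w : ι → ℝ) :
    ∫ x, cost x (S x) ∂μ - dualObjective μ a (fun i x => cost x (y i)) w =
      ∫ x, (cost x (S x) - pointWeight y w (S x) -
        cTransform (fun i x => cost x (y i)) w x) ∂μ := by
  have hcS := integrable_cost_comp hcost hc hS hmap
  have hwS := integrable_comp_of_map_eq hS hmap (measurable_pointWeight y w)
  rw [integral_sub (f := fun x => cost x (S x) - pointWeight y w (S x)) (hcS.sub hwS)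
    (integrable_cTransform hc w), integral_sub hcS hwS,
    integral_comp_of_map_eq ha hS hmap (measurable_pointWeight y w)]
  simp only [pointWeight_apply hy, dualObjective]
  ring

theorem dualObjective_le_integral_cost (ha : ∀ i, 0 ≤ a i) (hy : Injective y)
    (hcost : Measurable (uncurry cost)) (hc : ∀ i, Integrable (fun x => cost x (y i)) μ)
    (hS : Measurable S) (hmap : μ.map S = ∑ i, ENNReal.ofReal (a i) • Measure.dirac (y i))
    (w : ι → ℝ) : dualObjective μ a (fun i x => cost x (y i)) w ≤ ∫ x, cost x (S x) ∂μ := by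
  have := integral_nonneg_of_ae
    ((ae_cTransform_le_cost_sub_pointWeight (cost := cost) hy hS hmap w).mono fun x hx =>
      sub_nonneg.2 hx)
  rw [← integral_cost_sub_dualObjective ha hy hcost hc hS hmap w] at this
  linarith

theorem integral_cost_eq_dualObjective_iff (ha : ∀ i, 0 ≤ a i) (hy : Injective y)
    (hcost : Measurable (uncurry cost)) (hc : ∀ i, Integrable (fun x => cost x (y i)) μ)
    (hS : Measurable S) (hmap : μ.map S = ∑ i, ENNReal.ofReal (a i) • Measure.dirac (y i))
    (w : ι → ℝ) :
    ∫ x, cost x (S x) ∂μ = dualObjective μ a (fun i x => cost x (y i)) w ↔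
      ∀ᵐ x ∂μ, ∃ i, S x = y i ∧ x ∈ laguerreCell (fun i x => cost x (y i)) w i := by
  have hslack := (ae_cTransform_le_cost_sub_pointWeight (cost := cost) hy hS hmap w).mono
    fun x hx => sub_nonneg.2 hx
  rw [← sub_eq_zero, integral_cost_sub_dualObjective ha hy hcost hc hS hmap w,
    integral_eq_zero_iff_of_nonneg_ae hslack (((integrable_cost_comp hcost hc hS hmap).sub
      (integrable_comp_of_map_eq hS hmap (measurable_pointWeight y w))).sub
        (integrable_cTransform hc w) :)]
  constructor
  · intro h
    filter_upwards [h, ae_exists_eq_of_map_eq hS hmap] with x hx ⟨i, hi⟩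
    refine ⟨i, hi, mem_laguerreCell_iff.2 ?_⟩
    simp only [Pi.zero_apply, hi, pointWeight_apply hy] at hx
    linarith
  · intro h
    filter_upwards [h] with x ⟨i, hi, hx⟩
    simp [hi, pointWeight_apply hy, mem_laguerreCell_iff.1 hx]

end Cost

/-- In the semi-discrete setting with Euclidean cost there is a
solution to Monge's problem, unique up to `μ`-null sets: a measurable map `T` with
`T₋#μ = ν` minimizing `∫ ‖x - T x‖ dμ` over all transport maps, and any other
minimizer agrees with `T` `μ`-almost everywhere. -/
theorem semidiscrete_monge_exists_unique
    {d n : ℕ} (hd : 2 ≤ d)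
    (μ : Measure (EuclideanSpace ℝ (Fin d))) [IsProbabilityMeasure μ]
    (hac : μ ≪ volume)
    (hμint : Integrable (fun x => ‖x‖) μ)
    (y : Fin n → EuclideanSpace ℝ (Fin d)) (hy : Function.Injective y)
    (a : Fin n → ℝ) (ha : ∀ j, a j ∈ Set.Ioc (0 : ℝ) 1) (hsum : ∑ j, a j = 1)
    (ν : Measure (EuclideanSpace ℝ (Fin d)))
    (hν : ν = ∑ j, ENNReal.ofReal (a j) • Measure.dirac (y j)) :
    ∃ T : EuclideanSpace ℝ (Fin d) → EuclideanSpace ℝ (Fin d),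
      Measurable T ∧ μ.map T = ν ∧
      (∀ S : EuclideanSpace ℝ (Fin d) → EuclideanSpace ℝ (Fin d),
        Measurable S → μ.map S = ν →
        ∫ x, ‖x - T x‖ ∂μ ≤ ∫ x, ‖x - S x‖ ∂μ) ∧
      (∀ S : EuclideanSpace ℝ (Fin d) → EuclideanSpace ℝ (Fin d),
        Measurable S → μ.map S = ν →
        ∫ x, ‖x - S x‖ ∂μ = ∫ x, ‖x - T x‖ ∂μ → S =ᵐ[μ] T) := by
  subst hν
  have : Nonempty (Fin n) := ⟨⟨0, Nat.pos_of_ne_zero (by rintro rfl; simp at hsum)⟩⟩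
  have ha₀ : ∀ j, 0 ≤ a j := fun j => (ha j).1.le
  have hcost : Measurable (uncurry fun x z : EuclideanSpace ℝ (Fin d) => ‖x - z‖) :=
    (continuous_fst.sub continuous_snd).norm.measurable
  have hc : ∀ j, Integrable (fun x => ‖x - y j‖) μ := fun j =>
    (((integrable_norm_iff aestronglyMeasurable_id).1 hμint).sub (integrable_const _)).norm
  have htie : ∀ i j, i ≠ j → ∀ r, μ {x | ‖x - y i‖ - ‖x - y j‖ = r} = 0 := fun i j hij r =>
    hac (addHaar_setOf_norm_sub_sub_norm_sub_eq volume (by simpa using hd) (hy.ne hij) r)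
  obtain ⟨w, hw⟩ := exists_forall_dualObjective_le (fun j => (ha j).1) hsum hc
  obtain ⟨T, hT, hmapT, hTcell⟩ :=
    exists_map_eq_forall_mem_laguerreCell hsum (fun j => by fun_prop) hc htie hw y
  have hTcost := (integral_cost_eq_dualObjective_iff ha₀ hy hcost hc hT hmapT w).2
    (.of_forall hTcell)
  refine ⟨T, hT, hmapT, fun S hS hmapS => ?_, fun S hS hmapS hST => ?_⟩
  · exact hTcost ▸ dualObjective_le_integral_cost ha₀ hy hcost hc hS hmapS w
  filter_upwards [(integral_cost_eq_dualObjective_iff ha₀ hy hcost hc hS hmapS w).1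
    (hST.trans hTcost), ae_eq_of_mem_laguerreCell htie w] with x ⟨i, hSx, hxi⟩ huniq
  obtain ⟨j, hTx, hxj⟩ := hTcell x
  rw [hSx, hTx, huniq i j hxi hxj]
end

section
/- If the weight vector w ∈ ℝ^n is adapted to (μ, ν), i.e. μ(Vor_w(j)) = ν_j for every j ∈ {1, …, n}, then the map T_w sending (μ-almost) every point of Vor_w(j) to y_j is an optimal transport map from μ to ν for the Euclidean cost: it minimizes ∫ ‖x − T(x)‖ dμ(x) over all measurable T with T_{#}μ = ν, and any optimal transport map coincides with T_w μ-almost everywhere. -/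
open MeasureTheory ENNReal

noncomputable section

/-- The additively weighted Voronoi cell of the site `y j` with weights `w`. -/
def Vor {d n : ℕ} (y : Fin n → EuclideanSpace ℝ (Fin d)) (w : Fin n → ℝ) (j : Fin n) :
    Set (EuclideanSpace ℝ (Fin d)) :=
  {x | ∀ k, k ≠ j → ‖x - y j‖ - w j ≤ ‖x - y k‖ - w k}

/-!
The weights are a dual potential: with `φ (y j) = w j`, the reduced cost `‖x - z‖ - φ z` over
the sites `z` is minimal at `z = y j` for `x ∈ Vor_w(j)`, so `T` minimizes it pointwise among maps
into the sites, while `∫ φ (S x) dμ = ∫ φ dν` is the same for every transport map `S`. The cells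
cover space and their masses add up to `1 = μ univ`, so they overlap only in `μ`-null sets; hence
`T` pushes `μ` to `ν`, and a transport map of the same cost has the same reduced cost a.e., which
puts a.e. `x` in the cell of `S x` as well as that of `T x`, forcing `S x = T x`.
-/

open Set Function

section Partition

variable {ι α β : Type*} [MeasurableSpace α] [MeasurableSpace β] {μ : Measure α} {F : ι → Set α}

theorem pairwise_aedisjoint_of_sum_measure_eq [Fintype ι] [IsFiniteMeasure μ]
    (hF : ∀ i, MeasurableSet (F i)) (hcov : ⋃ i, F i = univ) (hsum : ∑ i, μ (F i) = μ univ) :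
    Pairwise (AEDisjoint μ on F) := by
  classical
  intro j k hjk
  set R := ⋃ i ∈ Finset.univ.erase j, F i
  have hR : MeasurableSet R := Finset.measurableSet_biUnion _ fun i _ => hF i
  have hunion : F j ∪ R = univ := by
    rw [← Finset.set_biUnion_insert, Finset.insert_erase (Finset.mem_univ j), ← hcov]
    simp
  have hle : μ univ + μ (F j ∩ R) ≤ μ univ + 0 := calc
    μ univ + μ (F j ∩ R) = μ (F j) + μ R := by rw [← hunion, measure_union_add_inter _ hR]
    _ ≤ μ (F j) + ∑ i ∈ Finset.univ.erase j, μ (F i) := by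
      gcongr; exact measure_biUnion_finset_le _ _
    _ = μ univ + 0 := by
      rw [Finset.add_sum_erase _ (fun i => μ (F i)) (Finset.mem_univ j), hsum, add_zero]
  refine measure_mono_null (inter_subset_inter_right _ ?_)
    (nonpos_iff_eq_zero.1 (ENNReal.le_of_add_le_add_left (measure_ne_top μ univ) hle))
  exact Finset.subset_set_biUnion_of_mem (Finset.mem_erase.2 ⟨hjk.symm, Finset.mem_univ k⟩)

theorem ae_eq_of_mem_of_pairwise_aedisjoint [Countable ι] (hdisj : Pairwise (AEDisjoint μ on F)) :
    ∀ᵐ x ∂μ, ∀ i j, x ∈ F i → x ∈ F j → i = j := by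
  refine ae_all_iff.2 fun i => ae_all_iff.2 fun j => ?_
  rcases eq_or_ne i j with rfl | hij
  · exact ae_of_all _ fun _ _ _ => rfl
  · filter_upwards [measure_eq_zero_iff_ae_notMem.1 (hdisj hij)] with x hx hi hj
    exact absurd ⟨hi, hj⟩ hx

theorem map_eq_sum_smul_dirac_of_ae_eq_on [Fintype ι] (hF : ∀ i, MeasurableSet (F i))
    (hcov : ⋃ i, F i = univ) (hdisj : Pairwise (AEDisjoint μ on F)) {T : α → β}
    (hT : AEMeasurable T μ) {y : ι → β} (hTF : ∀ i, ∀ᵐ x ∂μ, x ∈ F i → T x = y i) :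
    μ.map T = ∑ i, μ (F i) • Measure.dirac (y i) := by
  have hμ : ∑ i, μ.restrict (F i) = μ := by
    rw [← Measure.sum_fintype, ← Measure.restrict_iUnion_ae hdisj fun i => (hF i).nullMeasurableSet,
      hcov, Measure.restrict_univ]
  conv_lhs => rw [← hμ]
  rw [Measure.map_finset_sum' (hμ.symm ▸ hT)]
  refine Finset.sum_congr rfl fun i _ => ?_
  rw [Measure.map_congr (g := fun _ => y i) ((ae_restrict_iff' (hF i)).2 (hTF i)),
    Measure.map_const, Measure.restrict_apply_univ]

end Partition

section FiniteSupport

variable {ι α β : Type*} [Fintype ι] [MeasurableSpace α] [MeasurableSpace β]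
  [MeasurableSingletonClass β] {c : ι → ℝ≥0∞} {y : ι → β}

theorem integrable_sum_smul_dirac_s2 {E : Type*} [NormedAddCommGroup E] (hc : ∀ i, c i ≠ ∞)
    (f : β → E) : Integrable f (∑ i, c i • Measure.dirac (y i)) :=
  integrable_finsetSum_measure.2 fun i _ => (integrable_dirac enorm_lt_top).smul_measure (hc i)

theorem ae_exists_eq_of_map_eq_sum_smul_dirac {μ : Measure α} {S : α → β}
    (hS : AEMeasurable S μ) (hSν : μ.map S = ∑ i, c i • Measure.dirac (y i)) :
    ∀ᵐ x ∂μ, ∃ i, S x = y i := by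
  refine ae_of_ae_map (p := fun z => ∃ i, z = y i) hS ?_
  rw [hSν, ae_finsetSum_measure_iff]
  refine fun i _ => Measure.ae_smul_measure ?_ (c i)
  rw [ae_dirac_eq]
  exact ⟨i, rfl⟩

theorem integrable_of_map_eq_sum_smul_dirac [NormedAddCommGroup β] {μ : Measure α} {S : α → β}
    (hS : AEMeasurable S μ) (hSν : μ.map S = ∑ i, c i • Measure.dirac (y i)) (hc : ∀ i, c i ≠ ∞) :
    Integrable S μ := by
  have h := integrable_sum_smul_dirac_s2 (y := y) hc id
  rw [← hSν] at h
  exact (integrable_map_measure h.1 hS).1 h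

end FiniteSupport

section Duality

variable {α β : Type*} [MeasurableSpace α] [MeasurableSpace β] {μ : Measure α} {c : α → β → ℝ}
  {φ : β → ℝ} {T S : α → β}

theorem integrable_sub_potential_sub (hT : AEMeasurable T μ) (hS : AEMeasurable S μ)
    (hTS : μ.map T = μ.map S) (hφ : Integrable φ (μ.map T))
    (hcT : Integrable (fun x => c x (T x)) μ) (hcS : Integrable (fun x => c x (S x)) μ) :
    Integrable (fun x => (c x (S x) - φ (S x)) - (c x (T x) - φ (T x))) μ :=
  (hcS.sub ((hTS ▸ hφ).comp_aemeasurable hS)).sub (hcT.sub (hφ.comp_aemeasurable hT))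

theorem integral_sub_potential_sub (hT : AEMeasurable T μ) (hS : AEMeasurable S μ)
    (hTS : μ.map T = μ.map S) (hφ : Integrable φ (μ.map T))
    (hcT : Integrable (fun x => c x (T x)) μ) (hcS : Integrable (fun x => c x (S x)) μ) :
    ∫ x, (c x (S x) - φ (S x)) - (c x (T x) - φ (T x)) ∂μ =
      ∫ x, c x (S x) ∂μ - ∫ x, c x (T x) ∂μ := by
  have hφT : Integrable (fun x => φ (T x)) μ := hφ.comp_aemeasurable hT
  have hφS : Integrable (fun x => φ (S x)) μ := (hTS ▸ hφ).comp_aemeasurable hS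
  have hφTS : ∫ x, φ (T x) ∂μ = ∫ x, φ (S x) ∂μ := by
    rw [← integral_map hT hφ.1, hTS, integral_map hS (hTS ▸ hφ.1)]
  have hgS : Integrable (fun x => c x (S x) - φ (S x)) μ := hcS.sub hφS
  have hgT : Integrable (fun x => c x (T x) - φ (T x)) μ := hcT.sub hφT
  rw [integral_sub hgS hgT, integral_sub hcS hφS, integral_sub hcT hφT, hφTS]
  ring

theorem integral_le_of_ae_sub_potential_le (hT : AEMeasurable T μ) (hS : AEMeasurable S μ)
    (hTS : μ.map T = μ.map S) (hφ : Integrable φ (μ.map T))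
    (hcT : Integrable (fun x => c x (T x)) μ) (hcS : Integrable (fun x => c x (S x)) μ)
    (hle : ∀ᵐ x ∂μ, c x (T x) - φ (T x) ≤ c x (S x) - φ (S x)) :
    ∫ x, c x (T x) ∂μ ≤ ∫ x, c x (S x) ∂μ := by
  have h := integral_nonneg_of_ae (hle.mono fun x hx => sub_nonneg.2 hx)
  rw [integral_sub_potential_sub hT hS hTS hφ hcT hcS] at h
  linarith

theorem ae_sub_potential_eq_of_integral_eq (hT : AEMeasurable T μ) (hS : AEMeasurable S μ)
    (hTS : μ.map T = μ.map S) (hφ : Integrable φ (μ.map T))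
    (hcT : Integrable (fun x => c x (T x)) μ) (hcS : Integrable (fun x => c x (S x)) μ)
    (hle : ∀ᵐ x ∂μ, c x (T x) - φ (T x) ≤ c x (S x) - φ (S x))
    (heq : ∫ x, c x (S x) ∂μ = ∫ x, c x (T x) ∂μ) :
    ∀ᵐ x ∂μ, c x (S x) - φ (S x) = c x (T x) - φ (T x) := by
  have h := (integral_eq_zero_iff_of_nonneg_ae (hle.mono fun x hx => sub_nonneg.2 hx)
    (integrable_sub_potential_sub hT hS hTS hφ hcT hcS)).1
    (by rw [integral_sub_potential_sub hT hS hTS hφ hcT hcS, heq, sub_self])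
  filter_upwards [h] with x hx
  exact sub_eq_zero.1 hx

end Duality

section Voronoi

variable {d n : ℕ} (y : Fin n → EuclideanSpace ℝ (Fin d)) (w : Fin n → ℝ)

theorem mem_Vor_iff {x : EuclideanSpace ℝ (Fin d)} {j : Fin n} :
    x ∈ Vor y w j ↔ ∀ k, ‖x - y j‖ - w j ≤ ‖x - y k‖ - w k :=
  ⟨fun hx k => (eq_or_ne k j).elim (fun hkj => hkj ▸ le_rfl) (hx k), fun hx k _ => hx k⟩

theorem measurableSet_Vor (j : Fin n) : MeasurableSet (Vor y w j) := by
  have h : Vor y w j = ⋂ k, {x | ‖x - y j‖ - w j ≤ ‖x - y k‖ - w k} := by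
    ext x
    simp only [mem_Vor_iff, mem_iInter, mem_ofPred_eq]
  rw [h]
  exact MeasurableSet.iInter fun k => measurableSet_le (by fun_prop) (by fun_prop)

theorem exists_mem_Vor [Nonempty (Fin n)] (x : EuclideanSpace ℝ (Fin d)) : ∃ j, x ∈ Vor y w j :=
  (Finite.exists_min fun k => ‖x - y k‖ - w k).imp fun _ hj => (mem_Vor_iff y w).2 hj

theorem iUnion_Vor_eq_univ [Nonempty (Fin n)] : ⋃ j, Vor y w j = univ :=
  iUnion_eq_univ_iff.2 (exists_mem_Vor y w)

variable {y w} in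
theorem mem_Vor_of_le {x : EuclideanSpace ℝ (Fin d)} {j k : Fin n} (hj : x ∈ Vor y w j)
    (hk : ‖x - y k‖ - w k ≤ ‖x - y j‖ - w j) : x ∈ Vor y w k :=
  (mem_Vor_iff y w).2 fun m => hk.trans ((mem_Vor_iff y w).1 hj m)

variable {y w} {μ : Measure (EuclideanSpace ℝ (Fin d))}
  {T S : EuclideanSpace ℝ (Fin d) → EuclideanSpace ℝ (Fin d)}

theorem ae_norm_sub_sub_extend_le (hy : Injective y)
    (hT : ∀ᵐ x ∂μ, ∀ j, x ∈ Vor y w j → T x = y j) (hS : ∀ᵐ x ∂μ, ∃ k, S x = y k) :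
    ∀ᵐ x ∂μ, ‖x - T x‖ - extend y w 0 (T x) ≤ ‖x - S x‖ - extend y w 0 (S x) := by
  filter_upwards [hT, hS] with x hTx ⟨k, hk⟩
  have : Nonempty (Fin n) := ⟨k⟩
  obtain ⟨j, hj⟩ := exists_mem_Vor y w x
  rw [hTx j hj, hk, hy.extend_apply, hy.extend_apply]
  exact (mem_Vor_iff y w).1 hj k

theorem ae_eq_of_ae_norm_sub_sub_extend_eq (hy : Injective y)
    (huniq : ∀ᵐ x ∂μ, ∀ i j, x ∈ Vor y w i → x ∈ Vor y w j → i = j)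
    (hT : ∀ᵐ x ∂μ, ∀ j, x ∈ Vor y w j → T x = y j) (hS : ∀ᵐ x ∂μ, ∃ k, S x = y k)
    (heq : ∀ᵐ x ∂μ, ‖x - S x‖ - extend y w 0 (S x) = ‖x - T x‖ - extend y w 0 (T x)) :
    S =ᵐ[μ] T := by
  filter_upwards [huniq, hT, hS, heq] with x hxuniq hTx ⟨k, hk⟩ hx
  have : Nonempty (Fin n) := ⟨k⟩
  obtain ⟨j, hj⟩ := exists_mem_Vor y w x
  rw [hTx j hj, hk, hy.extend_apply, hy.extend_apply] at hx
  rw [hk, hTx j hj, hxuniq k j (mem_Vor_of_le hj hx.le) hj]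

end Voronoi

theorem adapted_weights_give_optimal_transport_partition_general
    {d n : ℕ}
    (μ : Measure (EuclideanSpace ℝ (Fin d))) [IsProbabilityMeasure μ]
    (hμint : Integrable (fun x => ‖x‖) μ)
    (y : Fin n → EuclideanSpace ℝ (Fin d)) (hy : Function.Injective y)
    (a : Fin n → ℝ) (ha : ∀ j, a j ∈ Set.Ioc (0 : ℝ) 1) (hsum : ∑ j, a j = 1)
    (ν : Measure (EuclideanSpace ℝ (Fin d)))
    (hν : ν = ∑ j, ENNReal.ofReal (a j) • Measure.dirac (y j))
    (w : Fin n → ℝ)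
    (hadapted : ∀ j, μ (Vor y w j) = ENNReal.ofReal (a j))
    (T : EuclideanSpace ℝ (Fin d) → EuclideanSpace ℝ (Fin d))
    (hT : Measurable T)
    (hTVor : ∀ j, ∀ᵐ x ∂μ, x ∈ Vor y w j → T x = y j) :
    μ.map T = ν ∧
    (∀ S : EuclideanSpace ℝ (Fin d) → EuclideanSpace ℝ (Fin d),
      Measurable S → μ.map S = ν →
      ∫ x, ‖x - T x‖ ∂μ ≤ ∫ x, ‖x - S x‖ ∂μ) ∧
    (∀ S : EuclideanSpace ℝ (Fin d) → EuclideanSpace ℝ (Fin d),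
      Measurable S → μ.map S = ν →
      ∫ x, ‖x - S x‖ ∂μ = ∫ x, ‖x - T x‖ ∂μ → S =ᵐ[μ] T) := by
  have : Nonempty (Fin n) := ⟨⟨0, Nat.pos_of_ne_zero fun hn => by subst hn; simp at hsum⟩⟩
  have hdisj : Pairwise (AEDisjoint μ on Vor y w) := by
    refine pairwise_aedisjoint_of_sum_measure_eq (measurableSet_Vor y w) (iUnion_Vor_eq_univ y w) ?_
    rw [measure_univ, Finset.sum_congr rfl fun j _ => hadapted j,
      ← ofReal_sum_of_nonneg fun j _ => (ha j).1.le, hsum, ofReal_one]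
  have hmapT : μ.map T = ν := by
    rw [map_eq_sum_smul_dirac_of_ae_eq_on (measurableSet_Vor y w) (iUnion_Vor_eq_univ y w) hdisj
      hT.aemeasurable hTVor, hν]
    simp_rw [hadapted]
  have hfin : ∀ j, ENNReal.ofReal (a j) ≠ ∞ := fun _ => ofReal_ne_top
  have hid : Integrable id μ := (integrable_norm_iff aestronglyMeasurable_id).1 hμint
  have hcost : ∀ S, Measurable S → μ.map S = ν → Integrable (fun x => ‖x - S x‖) μ :=
    fun S hS hSν =>
      (hid.sub (integrable_of_map_eq_sum_smul_dirac hS.aemeasurable (hSν.trans hν) hfin)).norm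
  have hsites : ∀ S, Measurable S → μ.map S = ν → ∀ᵐ x ∂μ, ∃ k, S x = y k :=
    fun S hS hSν => ae_exists_eq_of_map_eq_sum_smul_dirac hS.aemeasurable (hSν.trans hν)
  have hφ : Integrable (extend y w 0) (μ.map T) := hmapT ▸ hν ▸ integrable_sum_smul_dirac_s2 hfin _
  have hcell : ∀ᵐ x ∂μ, ∀ j, x ∈ Vor y w j → T x = y j := ae_all_iff.2 hTVor
  refine ⟨hmapT, fun S hS hSν => ?_, fun S hS hSν heq => ?_⟩
  · exact integral_le_of_ae_sub_potential_le (c := fun x z => ‖x - z‖) hT.aemeasurable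
      hS.aemeasurable (hmapT.trans hSν.symm) hφ (hcost T hT hmapT) (hcost S hS hSν)
      (ae_norm_sub_sub_extend_le hy hcell (hsites S hS hSν))
  · refine ae_eq_of_ae_norm_sub_sub_extend_eq hy (ae_eq_of_mem_of_pairwise_aedisjoint hdisj) hcell
      (hsites S hS hSν) ?_
    exact ae_sub_potential_eq_of_integral_eq (c := fun x z => ‖x - z‖) hT.aemeasurable
      hS.aemeasurable (hmapT.trans hSν.symm) hφ (hcost T hT hmapT) (hcost S hS hSν)
      (ae_norm_sub_sub_extend_le hy hcell (hsites S hS hSν)) heq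

/-- If `w` is adapted to `(μ, ν)`, i.e. `μ(Vor_w(j)) = ν_j` for all `j`,
then any map `T` sending `μ`-almost every point of `Vor_w(j)` to `y j` is an optimal
transport map from `μ` to `ν` for the Euclidean cost, and every optimal transport map
coincides with `T` `μ`-almost everywhere. -/
theorem adapted_weights_give_optimal_transport_partition
    {d n : ℕ} (hd : 2 ≤ d)
    (μ : Measure (EuclideanSpace ℝ (Fin d))) [IsProbabilityMeasure μ]
    (hac : μ ≪ volume)
    (hμint : Integrable (fun x => ‖x‖) μ)
    (y : Fin n → EuclideanSpace ℝ (Fin d)) (hy : Function.Injective y)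
    (a : Fin n → ℝ) (ha : ∀ j, a j ∈ Set.Ioc (0 : ℝ) 1) (hsum : ∑ j, a j = 1)
    (ν : Measure (EuclideanSpace ℝ (Fin d)))
    (hν : ν = ∑ j, ENNReal.ofReal (a j) • Measure.dirac (y j))
    (w : Fin n → ℝ)
    (hadapted : ∀ j, μ (Vor y w j) = ENNReal.ofReal (a j))
    (T : EuclideanSpace ℝ (Fin d) → EuclideanSpace ℝ (Fin d))
    (hT : Measurable T)
    (hTVor : ∀ j, ∀ᵐ x ∂μ, x ∈ Vor y w j → T x = y j) :
    μ.map T = ν ∧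
    (∀ S : EuclideanSpace ℝ (Fin d) → EuclideanSpace ℝ (Fin d),
      Measurable S → μ.map S = ν →
      ∫ x, ‖x - T x‖ ∂μ ≤ ∫ x, ‖x - S x‖ ∂μ) ∧
    (∀ S : EuclideanSpace ℝ (Fin d) → EuclideanSpace ℝ (Fin d),
      Measurable S → μ.map S = ν →
      ∫ x, ‖x - S x‖ ∂μ = ∫ x, ‖x - T x‖ ∂μ → S =ᵐ[μ] T) :=
  adapted_weights_give_optimal_transport_partition_general μ hμint y hy a ha hsum ν hν w hadapted T
    hT hTVor
end
end

section
/- Let μ, ν, α be finite Borel measures on ℝ^d with μ(ℝ^d) = ν(ℝ^d) and W_1(μ, ν) < ∞. Then W_1(α + μ, α + ν) = W_1(μ, ν). -/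
/-!
Disintegrate a coupling `π` of `α + μ` and `α + ν` as `π = (α + μ) ⊗ K` and run a relay. The
mass of `μ` starts at rest; at each step the current position `y` is moved by `K`, and at the new
position `y'` the fraction `dν/d(α + ν) (y')` of the moving mass stops while the fraction
`dα/d(α + ν) (y')` moves on. Summed over all steps, the positions occupied by the moving mass form
a measure below `α + μ` (because `K` carries `α + μ` to `α + ν`), so the moving mass tends to zero
and the stopped mass, recorded together with its starting point, is a coupling of `μ` and `ν`. By
the triangle inequality its cost is at most the total cost of the individual `K`-steps, which is
bounded by `∫ c dπ`. Conversely, adding the diagonal coupling of `α` to a coupling of `μ` and `ν`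
costs nothing.
-/

open MeasureTheory ProbabilityTheory ENNReal Filter Topology

noncomputable section

lemma Finset.sum_range_add_eq_of_add_succ_eq {M : Type*} [AddCommMonoid M] {a b : ℕ → M}
    (h : ∀ k, a k + b (k + 1) = b k) (n : ℕ) : ∑ k ∈ Finset.range n, a k + b n = b 0 := by
  induction n with
  | zero => simp
  | succ n ih => rw [Finset.sum_range_succ, add_assoc, h, ih]

lemma Finset.sum_range_add_le_of_add_succ_le {M : Type*} [AddCommMonoid M] [PartialOrder M]
    [IsOrderedAddMonoid M] {a b e : ℕ → M} (h : ∀ k, a k + b (k + 1) ≤ b k + e k) (n : ℕ) :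
    ∑ k ∈ Finset.range n, a k + b n ≤ b 0 + ∑ k ∈ Finset.range n, e k := by
  induction n with
  | zero => simp
  | succ n ih =>
    calc ∑ k ∈ Finset.range (n + 1), a k + b (n + 1)
        = ∑ k ∈ Finset.range n, a k + (a n + b (n + 1)) := by
          rw [Finset.sum_range_succ, add_assoc]
      _ ≤ ∑ k ∈ Finset.range n, a k + (b n + e n) := add_le_add_right (h n) _
      _ = ∑ k ∈ Finset.range n, a k + b n + e n := (add_assoc _ _ _).symm
      _ ≤ b 0 + ∑ k ∈ Finset.range (n + 1), e k := by
        rw [Finset.sum_range_succ, ← add_assoc]; gcongr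

namespace ProbabilityTheory.Kernel

variable {X Y Z : Type*} [MeasurableSpace X] [MeasurableSpace Y] [MeasurableSpace Z]
  (K : Kernel Y Z) [IsMarkovKernel K]

lemma map_fst_id_parallelComp :
    (Kernel.id ∥ₖ K : Kernel (X × Y) (X × Z)).map Prod.fst =
      deterministic Prod.fst measurable_fst := by
  ext1 p
  rw [map_apply _ measurable_fst, parallelComp_apply, Measure.map_fst_prod, measure_univ, one_smul,
    id_apply, deterministic_apply]

lemma map_snd_id_parallelComp :
    (Kernel.id ∥ₖ K : Kernel (X × Y) (X × Z)).map Prod.snd = prodMkLeft X K := by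
  ext1 p
  rw [map_apply _ measurable_snd, parallelComp_apply, Measure.map_snd_prod, id_apply, measure_univ,
    one_smul, prodMkLeft_apply]

end ProbabilityTheory.Kernel

namespace MeasureTheory.Measure

variable {X Y Z : Type*} [MeasurableSpace X] [MeasurableSpace Y] [MeasurableSpace Z]

lemma comp_mono (κ : Kernel X Y) {μ ν : Measure X} (h : μ ≤ ν) : κ ∘ₘ μ ≤ κ ∘ₘ ν :=
  le_iff.2 fun s hs => by
    rw [bind_apply hs κ.aemeasurable, bind_apply hs κ.aemeasurable]
    exact lintegral_mono' h le_rfl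

lemma withDensity_mono_measure (f : X → ℝ≥0∞) {μ ν : Measure X} (h : μ ≤ ν) :
    μ.withDensity f ≤ ν.withDensity f :=
  le_iff.2 fun s hs => by
    rw [withDensity_apply _ hs, withDensity_apply _ hs]
    exact lintegral_mono' (restrict_mono subset_rfl h) le_rfl

lemma map_withDensity_comp {g : X → Y} (hg : Measurable g) {f : Y → ℝ≥0∞} (hf : Measurable f)
    (m : Measure X) : (m.withDensity (f ∘ g)).map g = (m.map g).withDensity f := by
  ext s hs
  rw [map_apply hg hs, withDensity_apply _ (hg hs), withDensity_apply _ hs, restrict_map hg hs,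
    lintegral_map hf hg]
  rfl

lemma withDensity_add_withDensity_eq_self {f g : X → ℝ≥0∞} (hf : Measurable f) {m : Measure X}
    (h : ∀ᵐ x ∂m, f x + g x = 1) : m.withDensity f + m.withDensity g = m := by
  rw [← withDensity_add_left hf, Pi.add_def, withDensity_congr_ae (g := 1) h, withDensity_one]

lemma sum_eq_of_sum_range_add_eq {a b : ℕ → Measure X} {m : Measure X}
    (h : ∀ n, ∑ k ∈ Finset.range n, a k + b n = m)
    (hb : Tendsto (fun n => b n Set.univ) atTop (𝓝 0)) : Measure.sum a = m := by
  ext s hs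
  have hbs : Tendsto (fun n => b n s) atTop (𝓝 0) :=
    tendsto_of_tendsto_of_tendsto_of_le_of_le tendsto_const_nhds hb (fun _ => zero_le)
      fun n => measure_mono (Set.subset_univ s)
  have hlim := (ENNReal.tendsto_nat_tsum fun k => a k s).add hbs
  simp_rw [← finsetSum_apply, ← add_apply, h, add_zero] at hlim
  rw [sum_apply _ hs]
  exact tendsto_nhds_unique hlim tendsto_const_nhds

lemma sum_le_of_sum_range_le {a : ℕ → Measure X} {m : Measure X}
    (h : ∀ n, ∑ k ∈ Finset.range n, a k ≤ m) : Measure.sum a ≤ m :=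
  le_iff.2 fun s hs => by
    rw [sum_apply _ hs]
    exact ENNReal.tsum_le_of_sum_range_le fun n => by rw [← finsetSum_apply]; exact h n s

lemma rnDeriv_add_rnDeriv_eq_one (α ν : Measure X) [IsFiniteMeasure α] [IsFiniteMeasure ν] :
    ∀ᵐ x ∂(α + ν), ν.rnDeriv (α + ν) x + α.rnDeriv (α + ν) x = 1 := by
  filter_upwards [Measure.rnDeriv_add ν α (α + ν), Measure.rnDeriv_self (α + ν)] with x hadd hself
  rw [← Pi.add_apply, ← hadd, add_comm ν, hself]

lemma sum_range_iterate_le (T : Measure X →+ Measure X) (hT : Monotone T) {a b : Measure X}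
    (hab : T (a + b) ≤ a) (n : ℕ) : ∑ k ∈ Finset.range n, T^[k] b ≤ a + b := by
  induction n with
  | zero => simpa using Measure.zero_le _
  | succ n ih =>
    have hshift : ∑ k ∈ Finset.range n, T^[k + 1] b = T (∑ k ∈ Finset.range n, T^[k] b) := by
      simp only [_root_.map_sum, Function.iterate_succ_apply']
    calc ∑ k ∈ Finset.range (n + 1), T^[k] b = T (∑ k ∈ Finset.range n, T^[k] b) + b := by
          rw [Finset.sum_range_succ', hshift, Function.iterate_zero_apply]
      _ ≤ T (a + b) + b := add_le_add_left (hT ih) b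
      _ ≤ a + b := add_le_add_left hab b

lemma prodMkLeft_comp (K : Kernel Y Z) (m : Measure (X × Y)) :
    Kernel.prodMkLeft X K ∘ₘ m = K ∘ₘ m.snd := by
  rw [Measure.snd, ← deterministic_comp_eq_map measurable_snd, comp_assoc,
    Kernel.comp_deterministic_eq_comap, Kernel.prodMkLeft]

section IdParallelComp

variable (K : Kernel Y Z) [IsMarkovKernel K] (m : Measure (X × Y))

lemma fst_id_parallelComp_comp : ((Kernel.id ∥ₖ K) ∘ₘ m).fst = m.fst := by
  rw [Measure.fst, map_comp _ _ measurable_fst, Kernel.map_fst_id_parallelComp,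
    deterministic_comp_eq_map, Measure.fst]

lemma snd_id_parallelComp_comp : ((Kernel.id ∥ₖ K) ∘ₘ m).snd = K ∘ₘ m.snd := by
  rw [Measure.snd, map_comp _ _ measurable_snd, Kernel.map_snd_id_parallelComp, prodMkLeft_comp]

lemma lintegral_id_parallelComp_comp {h : X × Z → ℝ≥0∞} (hh : Measurable h) :
    ∫⁻ p, h p ∂((Kernel.id ∥ₖ K : Kernel (X × Y) (X × Z)) ∘ₘ m) =
      ∫⁻ p, ∫⁻ z, h (p.1, z) ∂(K p.2) ∂m := by
  rw [lintegral_bind (Kernel.aemeasurable _) hh.aemeasurable]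
  refine lintegral_congr fun p => ?_
  rw [Kernel.parallelComp_apply, lintegral_prod _ hh.aemeasurable, Kernel.id_apply,
    lintegral_dirac' _ hh.lintegral_prod_right']

end IdParallelComp

lemma lintegral_id_parallelComp_comp_le (K : Kernel X X) [IsMarkovKernel K] {c : X → X → ℝ≥0∞}
    (hc : Measurable fun p : X × X => c p.1 p.2) (htri : ∀ x y z, c x z ≤ c x y + c y z)
    (m : Measure (X × X)) :
    ∫⁻ p, c p.1 p.2 ∂((Kernel.id ∥ₖ K : Kernel (X × X) (X × X)) ∘ₘ m) ≤
      ∫⁻ p, c p.1 p.2 ∂m + ∫⁻ y, ∫⁻ z, c y z ∂(K y) ∂m.snd := by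
  have hF : Measurable fun y => ∫⁻ z, c y z ∂(K y) := hc.lintegral_kernel_prod_right'
  rw [lintegral_id_parallelComp_comp K m hc, Measure.snd, lintegral_map hF measurable_snd,
    ← lintegral_add_left hc]
  refine lintegral_mono fun p => ?_
  calc ∫⁻ z, c p.1 z ∂(K p.2) ≤ ∫⁻ z, c p.1 p.2 + c p.2 z ∂(K p.2) :=
        lintegral_mono fun z => htri _ _ _
    _ = c p.1 p.2 + ∫⁻ z, c p.2 z ∂(K p.2) := by
      rw [lintegral_add_left measurable_const, lintegral_const, measure_univ, mul_one]

end MeasureTheory.Measure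

section Relay

variable {X Y : Type*} [MeasurableSpace X] [MeasurableSpace Y] (K : Kernel Y Y)

/-- A measure on `X × Y` describes moving mass by its origin and its current position: the
position is moved by `K` and then the fraction `f` of the mass at the new position is kept. -/
def relayStep (f : Y → ℝ≥0∞) (m : Measure (X × Y)) : Measure (X × Y) :=
  ((Kernel.id ∥ₖ K) ∘ₘ m).withDensity (f ∘ Prod.snd)

def relayMarginal (f : Y → ℝ≥0∞) : Measure Y →+ Measure Y where
  toFun m := (K ∘ₘ m).withDensity f
  map_zero' := by simp
  map_add' m m' := by simp only [Measure.comp_add, withDensity_add_measure]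

lemma relayMarginal_mono (f : Y → ℝ≥0∞) : Monotone (relayMarginal K f) := fun _ _ h =>
  Measure.withDensity_mono_measure f (Measure.comp_mono K h)

variable [IsMarkovKernel K] {f g : Y → ℝ≥0∞}

lemma snd_relayStep (hf : Measurable f) (m : Measure (X × Y)) :
    (relayStep K f m).snd = relayMarginal K f m.snd := by
  rw [relayStep, Measure.snd, Measure.map_withDensity_comp measurable_snd hf, ← Measure.snd,
    Measure.snd_id_parallelComp_comp]
  rfl

lemma relayStep_add_relayStep (hg : Measurable g) {m : Measure (X × Y)}
    (h : ∀ᵐ y ∂(K ∘ₘ m.snd), g y + f y = 1) :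
    relayStep K g m + relayStep K f m = (Kernel.id ∥ₖ K) ∘ₘ m := by
  rw [← Measure.snd_id_parallelComp_comp] at h
  exact Measure.withDensity_add_withDensity_eq_self (hg.comp measurable_snd)
    (ae_of_ae_map measurable_snd.aemeasurable h)

end Relay

section RelayChain

variable {X : Type*} [MeasurableSpace X] (K : Kernel X X) (μ α ν : Measure X)

def relayRemaining (n : ℕ) : Measure (X × X) :=
  (relayStep K (α.rnDeriv (α + ν)))^[n] (μ.map fun x => (x, x))

def relayArrived (n : ℕ) : Measure (X × X) :=
  relayStep K (ν.rnDeriv (α + ν)) (relayRemaining K μ α ν n)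

variable {K μ α ν}

lemma snd_relayRemaining [IsMarkovKernel K] (n : ℕ) :
    (relayRemaining K μ α ν n).snd = (relayMarginal K (α.rnDeriv (α + ν)))^[n] μ := by
  have hsemiconj : Function.Semiconj (Measure.snd : Measure (X × X) → Measure X)
      (relayStep K (α.rnDeriv (α + ν))) (relayMarginal K (α.rnDeriv (α + ν))) :=
    snd_relayStep K (Measure.measurable_rnDeriv _ _)
  rw [relayRemaining, hsemiconj.iterate_right n,
    Measure.snd_map_prodMk (X := fun x : X => x) measurable_id', Measure.map_id']

variable [IsFiniteMeasure α] [IsFiniteMeasure ν]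

lemma relayMarginal_rnDeriv_apply (hK : K ∘ₘ (α + μ) = α + ν) {ξ : Measure X}
    [IsFiniteMeasure ξ] (hξ : ξ ≤ α + ν) : relayMarginal K (ξ.rnDeriv (α + ν)) (α + μ) = ξ := by
  show (K ∘ₘ (α + μ)).withDensity _ = ξ
  rw [hK]
  exact Measure.withDensity_rnDeriv_eq _ _ (Measure.absolutelyContinuous_of_le hξ)

variable [IsMarkovKernel K]

lemma sum_snd_relayRemaining_le (hK : K ∘ₘ (α + μ) = α + ν) (n : ℕ) :
    ∑ k ∈ Finset.range n, (relayRemaining K μ α ν k).snd ≤ α + μ := by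
  simp_rw [snd_relayRemaining]
  exact Measure.sum_range_iterate_le _ (relayMarginal_mono K _)
    (relayMarginal_rnDeriv_apply hK (Measure.le_add_right le_rfl)).le n

lemma tendsto_relayRemaining_univ [IsFiniteMeasure μ] (hK : K ∘ₘ (α + μ) = α + ν) :
    Tendsto (fun n => relayRemaining K μ α ν n Set.univ) atTop (𝓝 0) := by
  refine ENNReal.tendsto_atTop_zero_of_tsum_ne_top <| ne_top_of_le_ne_top
    (measure_ne_top (α + μ) Set.univ) (ENNReal.tsum_le_of_sum_range_le fun n => ?_)
  simp_rw [← Measure.snd_univ, ← Measure.finsetSum_apply]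
  exact sum_snd_relayRemaining_le hK n Set.univ

lemma relayArrived_add_relayRemaining_succ (hK : K ∘ₘ (α + μ) = α + ν) (n : ℕ) :
    relayArrived K μ α ν n + relayRemaining K μ α ν (n + 1) =
      (Kernel.id ∥ₖ K : Kernel (X × X) (X × X)) ∘ₘ relayRemaining K μ α ν n := by
  have hle : (relayRemaining K μ α ν n).snd ≤ α + μ :=
    (Finset.single_le_sum (fun k _ => Measure.zero_le _) (Finset.self_mem_range_succ n)).trans
      (sum_snd_relayRemaining_le hK (n + 1))
  have hK_le : K ∘ₘ (relayRemaining K μ α ν n).snd ≤ α + ν := hK ▸ Measure.comp_mono K hle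
  rw [relayRemaining, Function.iterate_succ_apply']
  exact relayStep_add_relayStep K (Measure.measurable_rnDeriv _ _)
    (ae_mono hK_le (Measure.rnDeriv_add_rnDeriv_eq_one α ν))

lemma fst_sum_relayArrived [IsFiniteMeasure μ] (hK : K ∘ₘ (α + μ) = α + ν) :
    (Measure.sum (relayArrived K μ α ν)).fst = μ := by
  have hstep (k : ℕ) : (relayArrived K μ α ν k).fst + (relayRemaining K μ α ν (k + 1)).fst =
      (relayRemaining K μ α ν k).fst := by
    rw [← Measure.fst_add, relayArrived_add_relayRemaining_succ hK,
      Measure.fst_id_parallelComp_comp]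
  have hzero : (relayRemaining K μ α ν 0).fst = μ := by
    rw [relayRemaining, Function.iterate_zero_apply,
      Measure.fst_map_prodMk (Y := fun x : X => x) measurable_id', Measure.map_id']
  rw [Measure.fst_sum]
  refine Measure.sum_eq_of_sum_range_add_eq (b := fun n => (relayRemaining K μ α ν n).fst)
    (fun n => ?_) ?_
  · exact (Finset.sum_range_add_eq_of_add_succ_eq (a := fun k => (relayArrived K μ α ν k).fst)
      (b := fun k => (relayRemaining K μ α ν k).fst) hstep n).trans hzero
  · simpa only [Measure.fst_univ] using tendsto_relayRemaining_univ hK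

lemma snd_sum_relayArrived_le (hK : K ∘ₘ (α + μ) = α + ν) :
    (Measure.sum (relayArrived K μ α ν)).snd ≤ ν := by
  rw [Measure.snd_sum]
  refine Measure.sum_le_of_sum_range_le fun n => ?_
  simp_rw [relayArrived, snd_relayStep K (Measure.measurable_rnDeriv _ _), ← map_sum]
  calc relayMarginal K (ν.rnDeriv (α + ν)) (∑ k ∈ Finset.range n, (relayRemaining K μ α ν k).snd)
      ≤ relayMarginal K (ν.rnDeriv (α + ν)) (α + μ) :=
        relayMarginal_mono K _ (sum_snd_relayRemaining_le hK n)
    _ = ν := relayMarginal_rnDeriv_apply hK (Measure.le_add_left le_rfl)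

lemma lintegral_sum_relayArrived_le (hK : K ∘ₘ (α + μ) = α + ν) {c : X → X → ℝ≥0∞}
    (hc : Measurable fun p : X × X => c p.1 p.2) (hdiag : ∀ x, c x x = 0)
    (htri : ∀ x y z, c x z ≤ c x y + c y z) :
    ∫⁻ p, c p.1 p.2 ∂(Measure.sum (relayArrived K μ α ν)) ≤
      ∫⁻ y, ∫⁻ z, c y z ∂(K y) ∂(α + μ) := by
  have hstep (k : ℕ) : ∫⁻ p, c p.1 p.2 ∂(relayArrived K μ α ν k) +
      ∫⁻ p, c p.1 p.2 ∂(relayRemaining K μ α ν (k + 1)) ≤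
      ∫⁻ p, c p.1 p.2 ∂(relayRemaining K μ α ν k) +
        ∫⁻ y, ∫⁻ z, c y z ∂(K y) ∂(relayRemaining K μ α ν k).snd := by
    rw [← lintegral_add_measure, relayArrived_add_relayRemaining_succ hK]
    exact Measure.lintegral_id_parallelComp_comp_le K hc htri _
  have hzero : ∫⁻ p, c p.1 p.2 ∂(relayRemaining K μ α ν 0) = 0 := by
    rw [relayRemaining, Function.iterate_zero_apply,
      lintegral_map hc (by fun_prop : Measurable fun x : X => (x, x))]
    simp [hdiag]
  rw [lintegral_sum_measure]
  refine ENNReal.tsum_le_of_sum_range_le fun n => ?_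
  calc ∑ k ∈ Finset.range n, ∫⁻ p, c p.1 p.2 ∂(relayArrived K μ α ν k)
      ≤ ∑ k ∈ Finset.range n, ∫⁻ p, c p.1 p.2 ∂(relayArrived K μ α ν k) +
          ∫⁻ p, c p.1 p.2 ∂(relayRemaining K μ α ν n) := le_self_add
    _ ≤ ∫⁻ p, c p.1 p.2 ∂(relayRemaining K μ α ν 0) +
          ∑ k ∈ Finset.range n, ∫⁻ y, ∫⁻ z, c y z ∂(K y) ∂(relayRemaining K μ α ν k).snd :=
        Finset.sum_range_add_le_of_add_succ_le
          (a := fun k => ∫⁻ p, c p.1 p.2 ∂(relayArrived K μ α ν k))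
          (b := fun k => ∫⁻ p, c p.1 p.2 ∂(relayRemaining K μ α ν k)) hstep n
    _ = ∫⁻ y, ∫⁻ z, c y z ∂(K y) ∂(∑ k ∈ Finset.range n, (relayRemaining K μ α ν k).snd) := by
        rw [hzero, zero_add, lintegral_finsetSum_measure]
    _ ≤ ∫⁻ y, ∫⁻ z, c y z ∂(K y) ∂(α + μ) :=
        lintegral_mono' (sum_snd_relayRemaining_le hK n) le_rfl

end RelayChain

section Coupling

variable {X : Type*} [MeasurableSpace X] {c : X → X → ℝ≥0∞}

theorem exists_coupling_add_eq {μ ν : Measure X} (α : Measure X)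
    (hc : Measurable fun p : X × X => c p.1 p.2) (hdiag : ∀ x, c x x = 0) {π : Measure (X × X)}
    (h1 : π.fst = μ) (h2 : π.snd = ν) :
    ∃ π' : Measure (X × X), π'.fst = α + μ ∧ π'.snd = α + ν ∧
      ∫⁻ p, c p.1 p.2 ∂π' = ∫⁻ p, c p.1 p.2 ∂π := by
  have hmeas : Measurable fun x : X => (x, x) := by fun_prop
  refine ⟨α.map (fun x => (x, x)) + π, ?_, ?_, ?_⟩
  · rw [Measure.fst_add, Measure.fst_map_prodMk (Y := fun x : X => x) measurable_id',
      Measure.map_id', h1]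
  · rw [Measure.snd_add, Measure.snd_map_prodMk (X := fun x : X => x) measurable_id',
      Measure.map_id', h2]
  · rw [lintegral_add_measure, lintegral_map hc hmeas]
    simp [hdiag]

theorem exists_coupling_le_of_add [StandardBorelSpace X] [Nonempty X] {μ ν α : Measure X}
    [IsFiniteMeasure μ] [IsFiniteMeasure α] (hc : Measurable fun p : X × X => c p.1 p.2)
    (hdiag : ∀ x, c x x = 0) (htri : ∀ x y z, c x z ≤ c x y + c y z) {π : Measure (X × X)}
    (h1 : π.fst = α + μ) (h2 : π.snd = α + ν) :
    ∃ π' : Measure (X × X), π'.fst = μ ∧ π'.snd = ν ∧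
      ∫⁻ p, c p.1 p.2 ∂π' ≤ ∫⁻ p, c p.1 p.2 ∂π := by
  have : IsFiniteMeasure π := ⟨by rw [← Measure.fst_univ, h1]; exact measure_lt_top _ _⟩
  have : IsFiniteMeasure (α + ν) := h2 ▸ inferInstance
  have : IsFiniteMeasure ν := isFiniteMeasure_of_le (α + ν) (Measure.le_add_left le_rfl)
  have hπ : (α + μ) ⊗ₘ π.condKernel = π := h1 ▸ π.disintegrate π.condKernel
  have hK : π.condKernel ∘ₘ (α + μ) = α + ν := by rw [← Measure.snd_compProd, hπ, h2]
  have hmass : μ Set.univ = ν Set.univ := by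
    have h := Measure.comp_apply_univ (κ := π.condKernel) (μ := α + μ)
    rw [hK, Measure.add_apply, Measure.add_apply] at h
    exact ((ENNReal.add_right_inj (measure_ne_top α _)).mp h).symm
  set π' := Measure.sum (relayArrived π.condKernel μ α ν)
  have hfst : π'.fst = μ := fst_sum_relayArrived hK
  have hsnd : π'.snd = ν := by
    have : IsFiniteMeasure π'.snd := isFiniteMeasure_of_le ν (snd_sum_relayArrived_le hK)
    refine Measure.eq_of_le_of_measure_univ_eq (snd_sum_relayArrived_le hK) ?_
    rw [Measure.snd_univ, ← Measure.fst_univ, hfst, hmass]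
  refine ⟨π', hfst, hsnd, ?_⟩
  calc ∫⁻ p, c p.1 p.2 ∂π' ≤ ∫⁻ y, ∫⁻ z, c y z ∂(π.condKernel y) ∂(α + μ) :=
        lintegral_sum_relayArrived_le hK hc hdiag htri
    _ = ∫⁻ p, c p.1 p.2 ∂π := by rw [← Measure.lintegral_compProd hc, hπ]

end Coupling

def W1 {d : ℕ} (μ ν : Measure (EuclideanSpace ℝ (Fin d))) : ℝ≥0∞ :=
  ⨅ (π : Measure (EuclideanSpace ℝ (Fin d) × EuclideanSpace ℝ (Fin d)))
    (_ : π.map Prod.fst = μ) (_ : π.map Prod.snd = ν),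
    ∫⁻ z, ENNReal.ofReal ‖z.1 - z.2‖ ∂π

theorem W1_add_common_eq_general
    {d : ℕ} (μ ν α : Measure (EuclideanSpace ℝ (Fin d)))
    [IsFiniteMeasure μ] [IsFiniteMeasure α] :
    W1 (α + μ) (α + ν) = W1 μ ν := by
  let c : EuclideanSpace ℝ (Fin d) → EuclideanSpace ℝ (Fin d) → ℝ≥0∞ :=
    fun x y => ENNReal.ofReal ‖x - y‖
  have hc : Measurable fun p : EuclideanSpace ℝ (Fin d) × EuclideanSpace ℝ (Fin d) =>
      c p.1 p.2 := by fun_prop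
  have hdiag (x : EuclideanSpace ℝ (Fin d)) : c x x = 0 := by simp [c]
  have htri (x y z : EuclideanSpace ℝ (Fin d)) : c x z ≤ c x y + c y z :=
    (ENNReal.ofReal_le_ofReal (norm_sub_le_norm_sub_add_norm_sub x y z)).trans ENNReal.ofReal_add_le
  refine le_antisymm (le_iInf₂ fun π h1 => le_iInf fun h2 => ?_)
    (le_iInf₂ fun π h1 => le_iInf fun h2 => ?_)
  · obtain ⟨π', h1', h2', hcost⟩ := exists_coupling_add_eq α hc hdiag h1 h2
    exact (iInf₂_le π' h1').trans (iInf_le_of_le h2' hcost.le)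
  · obtain ⟨π', h1', h2', hcost⟩ := exists_coupling_le_of_add hc hdiag htri h1 h2
    exact (iInf₂_le π' h1').trans (iInf_le_of_le h2' hcost)

/-- For finite Borel measures `μ, ν, α` on `ℝ^d` with
`μ(ℝ^d) = ν(ℝ^d)` and `W₁(μ, ν) < ∞`, `W₁(α + μ, α + ν) = W₁(μ, ν)`. -/
theorem W1_add_common_eq
    {d : ℕ} (μ ν α : Measure (EuclideanSpace ℝ (Fin d)))
    [IsFiniteMeasure μ] [IsFiniteMeasure ν] [IsFiniteMeasure α]
    (hmass : μ Set.univ = ν Set.univ)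
    (hfin : W1 μ ν < ⊤) :
    W1 (α + μ) (α + ν) = W1 μ ν :=
  W1_add_common_eq_general μ ν α
end
end

section
/- Let μ, ν, α be finite Borel measures on ℝ^d with μ(ℝ^d) = ν(ℝ^d), let π be a coupling of μ and ν that is cyclically monotone for the Euclidean cost, and let α_Δ be the push-forward of α under the map x ↦ (x, x). Then π + α_Δ is a coupling of μ + α and ν + α that is again cyclically monotone for the Euclidean cost. -/
open MeasureTheory ENNReal

noncomputable section

/-- The (topological) support of a measure `π`: the set of points all of whose open
neighbourhoods have positive measure. -/
def measSupport {α : Type*} [TopologicalSpace α] [MeasurableSpace α]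
    (π : Measure α) : Set α :=
  {z | ∀ U : Set α, IsOpen U → z ∈ U → π U ≠ 0}

/-- A measure `π` on `ℝ^d × ℝ^d` is cyclically monotone for the Euclidean cost if for
every `N` and all pairs `(x_1,y_1), …, (x_N,y_N)` in its support,
`∑ᵢ ‖xᵢ - yᵢ‖ ≤ ∑ᵢ ‖xᵢ - y_{i+1}‖`, indices taken cyclically. -/
def CyclMonotone {d : ℕ}
    (π : Measure (EuclideanSpace ℝ (Fin d) × EuclideanSpace ℝ (Fin d))) : Prop :=
  ∀ (N : ℕ) (x y : Fin (N + 1) → EuclideanSpace ℝ (Fin d)),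
    (∀ i, (x i, y i) ∈ measSupport π) →
    ∑ i, ‖x i - y i‖ ≤ ∑ i, ‖x i - y (i + 1)‖

/-! Dropping a diagonal pair `(x, x)` from a cycle removes `‖x - x‖ = 0` from the left-hand
sum and, by the triangle inequality `‖x' - y''‖ ≤ ‖x' - x‖ + ‖x - y''‖`, does not increase the
right-hand sum; so by induction on its length a cycle through `supp π ∪ Δ` reduces to a cycle
through `supp π`. Since `α_Δ` vanishes off the closed diagonal `Δ`, the support of `π + α_Δ`
lies in `supp π ∪ Δ`. -/

section CyclicallyMonotone

variable {E : Type*} [SeminormedAddCommGroup E]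

def IsCyclicallyMonotone (S : Set (E × E)) : Prop :=
  ∀ (N : ℕ) (x y : Fin (N + 1) → E), (∀ i, (x i, y i) ∈ S) →
    ∑ i, ‖x i - y i‖ ≤ ∑ i, ‖x i - y (i + 1)‖

theorem IsCyclicallyMonotone.mono {S T : Set (E × E)} (hT : IsCyclicallyMonotone T)
    (hST : S ⊆ T) : IsCyclicallyMonotone S :=
  fun N x y h => hT N x y fun i => hST (h i)

theorem Fin.sum_norm_sub_comp_add_right {n : ℕ} [NeZero n] (x y : Fin n → E) (k m : Fin n) :
    ∑ i, ‖x (i + k) - y (i + m + k)‖ = ∑ i, ‖x i - y (i + m)‖ := by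
  simp_rw [add_right_comm _ m k]
  exact Equiv.sum_comp (Equiv.addRight k) fun i => ‖x i - y (i + m)‖

theorem Fin.sum_norm_sub_castSucc_le_of_last {M : ℕ} (x y : Fin (M + 2) → E)
    (hlast : x (Fin.last _) = y (Fin.last _)) :
    ∑ i : Fin (M + 1), ‖x i.castSucc - y (i + 1).castSucc‖ ≤ ∑ i, ‖x i - y (i + 1)‖ := by
  rw [Fin.sum_univ_castSucc, Fin.sum_univ_castSucc, Fin.sum_univ_castSucc]
  simp only [Fin.coeSucc_eq_succ, Fin.castSucc_succ, Fin.succ_last, Fin.last_add_one,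
    Fin.castSucc_zero, hlast, add_assoc]
  gcongr
  exact norm_sub_le_norm_sub_add_norm_sub _ _ _

theorem IsCyclicallyMonotone.union_diagonal {S : Set (E × E)} (hS : IsCyclicallyMonotone S) :
    IsCyclicallyMonotone (S ∪ Set.diagonal E) := by
  intro N
  induction N with
  | zero => intro x y _; simp
  | succ M ih =>
    intro x y h
    by_cases hall : ∀ i, (x i, y i) ∈ S
    · exact hS _ x y hall
    obtain ⟨j, hj⟩ := not_forall.mp hall
    have hdiag : x j = y j := (h j).resolve_left hj
    -- rotate the cycle so that the diagonal pair `(x j, y j)` comes last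
    set x' : Fin (M + 2) → E := fun i => x (i + (j + 1))
    set y' : Fin (M + 2) → E := fun i => y (i + (j + 1))
    have hlast : x' (Fin.last _) = y' (Fin.last _) := by
      simp only [x', y', add_comm j 1, ← add_assoc, Fin.last_add_one, zero_add, hdiag]
    calc ∑ i, ‖x i - y i‖ = ∑ i, ‖x' i - y' i‖ := by
          simpa only [add_zero] using (Fin.sum_norm_sub_comp_add_right x y (j + 1) 0).symm
      _ = ∑ i : Fin (M + 1), ‖x' i.castSucc - y' i.castSucc‖ := by
          rw [Fin.sum_univ_castSucc, hlast, sub_self, norm_zero, add_zero]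
      _ ≤ ∑ i : Fin (M + 1), ‖x' i.castSucc - y' (i + 1).castSucc‖ := ih _ _ fun i => h _
      _ ≤ ∑ i, ‖x' i - y' (i + 1)‖ := Fin.sum_norm_sub_castSucc_le_of_last x' y' hlast
      _ = ∑ i, ‖x i - y (i + 1)‖ := Fin.sum_norm_sub_comp_add_right x y (j + 1) 1

end CyclicallyMonotone

section Support

variable {X : Type*} [TopologicalSpace X] [MeasurableSpace X]

theorem measSupport_add_subset (π ρ : Measure X) :
    measSupport (π + ρ) ⊆ measSupport π ∪ measSupport ρ := by
  intro z hz
  by_contra! hout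
  simp only [Set.mem_union, measSupport, Set.mem_ofPred_eq, not_or, not_forall, not_not] at hout
  obtain ⟨⟨U, hU, hzU, hπU⟩, ⟨V, hV, hzV, hρV⟩⟩ := hout
  refine hz (U ∩ V) (hU.inter hV) ⟨hzU, hzV⟩ ?_
  simp only [Measure.add_apply, measure_mono_null Set.inter_subset_left hπU,
    measure_mono_null Set.inter_subset_right hρV, add_zero]

theorem measSupport_subset_of_isClosed {ρ : Measure X} {C : Set X} (hC : IsClosed C)
    (hρ : ρ Cᶜ = 0) : measSupport ρ ⊆ C := by
  intro z hz
  by_contra hzC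
  exact hz Cᶜ hC.isOpen_compl hzC hρ

end Support

theorem measSupport_map_diag_subset_diagonal {Y : Type*} [TopologicalSpace Y] [T2Space Y]
    [MeasurableSpace Y] [OpensMeasurableSpace (Y × Y)] (α : Measure Y) :
    measSupport (α.map fun y => (y, y)) ⊆ Set.diagonal Y := by
  refine measSupport_subset_of_isClosed isClosed_diagonal ?_
  rw [Measure.map_apply (by fun_prop) isClosed_diagonal.isOpen_compl.measurableSet]
  simp [Set.preimage]

section Marginals

variable {Y : Type*} [MeasurableSpace Y]

theorem map_fst_add_map_diag (π : Measure (Y × Y)) (α : Measure Y) :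
    (π + α.map fun y => (y, y)).map Prod.fst = π.map Prod.fst + α := by
  rw [Measure.map_add _ _ measurable_fst,
    Measure.map_map measurable_fst (by fun_prop : Measurable fun y : Y => (y, y))]
  exact congrArg (_ + ·) Measure.map_id

theorem map_snd_add_map_diag (π : Measure (Y × Y)) (α : Measure Y) :
    (π + α.map fun y => (y, y)).map Prod.snd = π.map Prod.snd + α := by
  rw [Measure.map_add _ _ measurable_snd,
    Measure.map_map measurable_snd (by fun_prop : Measurable fun y : Y => (y, y))]
  exact congrArg (_ + ·) Measure.map_id

end Marginals

theorem cyclMonotone_iff_isCyclicallyMonotone {d : ℕ}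
    (π : Measure (EuclideanSpace ℝ (Fin d) × EuclideanSpace ℝ (Fin d))) :
    CyclMonotone π ↔ IsCyclicallyMonotone (measSupport π) :=
  Iff.rfl

theorem cyclMonotone_add_diagonal_general
    {d : ℕ} (μ ν α : Measure (EuclideanSpace ℝ (Fin d)))
    (π : Measure (EuclideanSpace ℝ (Fin d) × EuclideanSpace ℝ (Fin d)))
    (hπ1 : π.map Prod.fst = μ) (hπ2 : π.map Prod.snd = ν)
    (hcm : CyclMonotone π) :
    (π + α.map (fun x => (x, x))).map Prod.fst = μ + α ∧
    (π + α.map (fun x => (x, x))).map Prod.snd = ν + α ∧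
    CyclMonotone (π + α.map (fun x => (x, x))) := by
  refine ⟨by rw [map_fst_add_map_diag, hπ1], by rw [map_snd_add_map_diag, hπ2], ?_⟩
  have hsupp : measSupport (π + α.map fun x => (x, x)) ⊆ measSupport π ∪ Set.diagonal _ :=
    (measSupport_add_subset _ _).trans
      (Set.union_subset_union_right _ (measSupport_map_diag_subset_diagonal α))
  rw [cyclMonotone_iff_isCyclicallyMonotone] at hcm ⊢
  exact hcm.union_diagonal.mono hsupp

/-- If `π` is a cyclically monotone coupling of `μ` and `ν`, and
`α_Δ` is the push-forward of `α` under `x ↦ (x, x)`, then `π + α_Δ` is a coupling of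
`μ + α` and `ν + α` that is again cyclically monotone. -/
theorem cyclMonotone_add_diagonal
    {d : ℕ} (μ ν α : Measure (EuclideanSpace ℝ (Fin d)))
    [IsFiniteMeasure μ] [IsFiniteMeasure ν] [IsFiniteMeasure α]
    (hmass : μ Set.univ = ν Set.univ)
    (π : Measure (EuclideanSpace ℝ (Fin d) × EuclideanSpace ℝ (Fin d)))
    (hπ1 : π.map Prod.fst = μ) (hπ2 : π.map Prod.snd = ν)
    (hcm : CyclMonotone π) :
    (π + α.map (fun x => (x, x))).map Prod.fst = μ + α ∧
    (π + α.map (fun x => (x, x))).map Prod.snd = ν + α ∧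
    CyclMonotone (π + α.map (fun x => (x, x))) :=
  cyclMonotone_add_diagonal_general μ ν α π hπ1 hπ2 hcm
end
end
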